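/- Let C : Fin n → Fin n → Fin n → ℝ be coefficients with C^δ_{μν} = −C^δ_{νμ}, and define functions π_{μν}(z) = Σ_δ C^δ_{μν} · log z_δ on (0,∞)ⁿ. Then the Jacobi-type identity Σ_{μ,ν} [(C^μ_{ρδ} C^ν_{δγ} + C^μ_{ργ} C^ν_{δγ}) log z_μ log z_ν + C^μ_{ρν} C^ν_{δγ} log z_μ] + c.p.(ρ,δ,γ) = 0 holds for all z ∈ (0,∞)ⁿ and all ρ,δ,γ if and only if the C^μ_{ρδ} satisfy the Jacobi identity Σ_ν (C^μ_{ρν} C^ν_{δγ} + C^μ_{δν} C^ν_{γρ} + C^μ_{γν} C^ν_{ρδ}) = 0 for all μ, ρ, δ, γ, i.e. iff the C's are structure constants of an n-dimensional Lie algebra. -/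

import Mathlib

/-!
With `L μ = log z_μ`, the cyclic sum is a quadratic form in `L` plus a linear one. Skew-symmetry of
`C` makes the coefficient matrix of the quadratic part antisymmetric, so that part vanishes
identically, and the linear part is `Σ_μ J^μ_{ρδγ} L μ` with `J` the Jacobiator. Since
`log : (0,∞) → ℝ` is onto, `L` ranges over all of `ℝⁿ`, so the identity holds for all `z` iff `J = 0`.
-/

open Real Finset

variable {ι R : Type*} [Fintype ι]

theorem sum_sum_mul_mul_eq_zero_of_antisymm [CommRing R] [IsAddTorsionFree R] {A : ι → ι → R}
    (hA : ∀ i j, A i j = -A j i) (x : ι → R) : ∑ i, ∑ j, A i j * x i * x j = 0 := by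
  set S := ∑ i, ∑ j, A i j * x i * x j
  have hS : S = -S := by
    calc S = ∑ j, ∑ i, A i j * x i * x j := sum_comm
      _ = ∑ j, ∑ i, -(A j i * x j * x i) :=
        sum_congr rfl fun j _ => sum_congr rfl fun i _ => by rw [hA]; ring
      _ = -S := by simp only [S, sum_neg_distrib]
  rw [← two_nsmul_eq_zero, two_nsmul]
  exact add_eq_zero_iff_eq_neg.2 hS

def jacobiator [CommRing R] (C : ι → ι → ι → R) (μ ρ δ γ : ι) : R :=
  ∑ ν, (C μ ρ ν * C ν δ γ + C μ δ ν * C ν γ ρ + C μ γ ν * C ν ρ δ)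

theorem cyclic_sum_eq_sum_jacobiator_mul [CommRing R] [IsAddTorsionFree R]
    {C : ι → ι → ι → R} (hskew : ∀ δ μ ν, C δ μ ν = -C δ ν μ) (L : ι → R) (ρ δ γ : ι) :
    (∑ μ, ∑ ν,
        ((C μ ρ δ * C ν δ γ + C μ ρ γ * C ν δ γ) * L μ * L ν + C μ ρ ν * C ν δ γ * L μ))
      + (∑ μ, ∑ ν,
        ((C μ δ γ * C ν γ ρ + C μ δ ρ * C ν γ ρ) * L μ * L ν + C μ δ ν * C ν γ ρ * L μ))
      + (∑ μ, ∑ ν,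
        ((C μ γ ρ * C ν ρ δ + C μ γ δ * C ν ρ δ) * L μ * L ν + C μ γ ν * C ν ρ δ * L μ))
    = ∑ μ, jacobiator C μ ρ δ γ * L μ := by
  -- `hskew` turns `C_{ργ}, C_{δρ}, C_{γδ}` into `-c, -a, -b`, exposing the antisymmetric `Q`
  let a μ := C μ ρ δ
  let b μ := C μ δ γ
  let c μ := C μ γ ρ
  let Q μ ν := (a μ * b ν - b μ * a ν) + (b μ * c ν - c μ * b ν) + (c μ * a ν - a μ * c ν)
  calc _ = ∑ μ, ∑ ν, Q μ ν * L μ * L ν + ∑ μ, jacobiator C μ ρ δ γ * L μ := by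
        simp only [jacobiator, sum_mul, ← sum_add_distrib, hskew _ ρ γ, hskew _ δ ρ, hskew _ γ δ]
        exact sum_congr rfl fun _ _ => sum_congr rfl fun _ _ => by ring
    _ = ∑ μ, jacobiator C μ ρ δ γ * L μ := by
        rw [sum_sum_mul_mul_eq_zero_of_antisymm (fun μ ν => by ring), zero_add]

theorem forall_pos_dotProduct_log_eq_zero_iff {v : ι → ℝ} :
    (∀ z : ι → ℝ, (∀ i, 0 < z i) → v ⬝ᵥ (fun i => log (z i)) = 0) ↔ v = 0 := by
  refine ⟨fun h => dotProduct_eq_zero_iff.1 fun L => ?_, fun hv _ _ => by rw [hv, zero_dotProduct]⟩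
  simpa using h (fun i => exp (L i)) fun i => exp_pos (L i)

/-- Classification of Poisson Lie structures on `(ℝ₊)ⁿ`: for antisymmetric
coefficients `C^δ_{μν}` (written `C δ μ ν`), the Jacobi-type identity (3.3) for
`π_{μν}(z) = Σ_δ C^δ_{μν} log z_δ`, summed over the cyclic permutations of
`(ρ,δ,γ)`, holds for all `z ∈ (0,∞)ⁿ` iff the `C`'s satisfy the Jacobi identity
(3.4), i.e. are structure constants of an `n`-dimensional Lie algebra. -/
theorem poisson_lie_on_positive_reals_iff_jacobi
    {n : ℕ} (C : Fin n → Fin n → Fin n → ℝ)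
    (hskew : ∀ δ μ ν, C δ μ ν = - C δ ν μ) :
    (∀ z : Fin n → ℝ, (∀ i, 0 < z i) → ∀ ρ δ γ : Fin n,
      (∑ μ, ∑ ν,
        ((C μ ρ δ * C ν δ γ + C μ ρ γ * C ν δ γ) * log (z μ) * log (z ν)
          + C μ ρ ν * C ν δ γ * log (z μ)))
      + (∑ μ, ∑ ν,
        ((C μ δ γ * C ν γ ρ + C μ δ ρ * C ν γ ρ) * log (z μ) * log (z ν)
          + C μ δ ν * C ν γ ρ * log (z μ)))
      + (∑ μ, ∑ ν,
        ((C μ γ ρ * C ν ρ δ + C μ γ δ * C ν ρ δ) * log (z μ) * log (z ν)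
          + C μ γ ν * C ν ρ δ * log (z μ))) = 0)
    ↔ (∀ μ ρ δ γ : Fin n,
        ∑ ν, (C μ ρ ν * C ν δ γ + C μ δ ν * C ν γ ρ + C μ γ ν * C ν ρ δ) = 0) := by
  simp only [cyclic_sum_eq_sum_jacobiator_mul hskew]
  constructor
  · intro h μ ρ δ γ
    have hJ := forall_pos_dotProduct_log_eq_zero_iff.1 fun z hz => h z hz ρ δ γ
    exact congrFun hJ μ
  · intro h z _ ρ δ γ
    simp only [jacobiator, h, zero_mul, sum_const_zero]
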